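/- arXiv:2305.00898 — 4 statements merged into one kernel-verified Lean document; each statement's English description precedes it below -/
import Mathlib

section
/- Let A, B be commuting elements of a unital algebra over a field, set E = AB and \Delta = 1 - AB. Suppose \Delta^m = 0 and \Delta^{m-1} \neq 0 (strict m-isometry condition). Then for every integer t \geq m-1, the family \{E^{t+r} \Delta^r\}_{r=0}^{m-1} is linearly independent. -/
theorem stmt_4 {K : Type*} [Field K] {R : Type*} [Ring R] [Algebra K R]
    (A B : R) (m : ℕ) (hm : 0 < m) (hcomm : A * B = B * A)
    (h1 : (1 - A * B) ^ m = 0) (h2 : (1 - A * B) ^ (m - 1) ≠ 0) :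
    ∀ t : ℕ, m - 1 ≤ t →
      LinearIndependent K
        (fun r : Fin m => (A * B) ^ (t + (r : ℕ)) * (1 - A * B) ^ (r : ℕ)) := by
  intro t ht
  set D : R := 1 - A * B with hDdef
  have hE : A * B = 1 - D := by rw [hDdef, sub_sub_cancel]
  have hDm : D ^ m = 0 := h1
  have key : ∀ s : ℕ, (1 - D) ^ s * D ^ (m - 1) = D ^ (m - 1) := by
    intro s
    induction s with
    | zero => rw [pow_zero, one_mul]
    | succ n ih =>
      have h3 : (1 - D) * D ^ (m - 1) = D ^ (m - 1) := by
        have h4 : D * D ^ (m - 1) = D ^ m := by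
          rw [← pow_succ', Nat.sub_add_cancel hm]
        rw [sub_mul, one_mul, h4, hDm, sub_zero]
      rw [pow_succ, mul_assoc, h3, ih]
  rw [Fintype.linearIndependent_iff]
  intro g hg
  have main : ∀ n : ℕ, ∀ j : Fin m, (j : ℕ) = n → g j = 0 := by
    intro n
    induction n using Nat.strong_induction_on with
    | _ n IH =>
    intro j hj
    have hjm : (j : ℕ) ≤ m - 1 := Nat.le_sub_one_of_lt j.isLt
    have h0 : (∑ i : Fin m, g i • ((A * B) ^ (t + (i : ℕ)) * D ^ (i : ℕ))) *
        D ^ (m - 1 - (j : ℕ)) = 0 := by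
      rw [hg, zero_mul]
    rw [Finset.sum_mul] at h0
    have hterm : ∀ i : Fin m, i ∈ Finset.univ → i ≠ j →
        (g i • ((A * B) ^ (t + (i : ℕ)) * D ^ (i : ℕ))) * D ^ (m - 1 - (j : ℕ)) = 0 := by
      intro i _ hij
      rcases lt_or_gt_of_ne (fun h => hij (Fin.ext h) : (i : ℕ) ≠ (j : ℕ)) with hlt | hgt
      · have hz : g i = 0 := IH (i : ℕ) (hj ▸ hlt) i rfl
        rw [hz, zero_smul, zero_mul]
      · have hpow : D ^ (i : ℕ) * D ^ (m - 1 - (j : ℕ)) = 0 := by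
          rw [← pow_add]
          have he : (i : ℕ) + (m - 1 - (j : ℕ)) =
              m + ((i : ℕ) + (m - 1 - (j : ℕ)) - m) := by omega
          rw [he, pow_add, hDm, zero_mul]
        rw [smul_mul_assoc, mul_assoc, hpow, mul_zero, smul_zero]
    have hsum := Finset.sum_eq_single_of_mem j (Finset.mem_univ j) hterm
    rw [hsum] at h0
    have hjj : D ^ (j : ℕ) * D ^ (m - 1 - (j : ℕ)) = D ^ (m - 1) := by
      rw [← pow_add]
      congr 1
      omega
    rw [smul_mul_assoc, mul_assoc, hjj, hE, key] at h0
    rcases smul_eq_zero.mp h0 with h | h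
    · exact h
    · exact absurd h h2
  intro i
  exact main (i : ℕ) i rfl
end

section
/- Let A, B be commuting elements of a unital algebra over a field and set \delta = A - B. Suppose (A-B)^m = 0, (A-B)^{m-1} \neq 0, and A^{m-1}(A-B)^{m-1} \neq 0. Then the family \{A^r (A-B)^r\}_{r=0}^{m-1} is linearly independent. -/
theorem stmt_5 {K : Type*} [Field K] {R : Type*} [Ring R] [Algebra K R]
    (A B : R) (m : ℕ) (hm : 0 < m) (hcomm : A * B = B * A)
    (h1 : (A - B) ^ m = 0) (h2 : (A - B) ^ (m - 1) ≠ 0)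
    (h3 : A ^ (m - 1) * (A - B) ^ (m - 1) ≠ 0) :
    LinearIndependent K
      (fun r : Fin m => A ^ (r : ℕ) * (A - B) ^ (r : ℕ)) := by
  have hc : Commute A (A - B) := (Commute.refl A).sub_right hcomm
  set C := A * (A - B) with hCdef
  have hC : ∀ k : ℕ, A ^ k * (A - B) ^ k = C ^ k := fun k => (hc.mul_pow k).symm
  have hd : ∀ k, m ≤ k → C ^ k = 0 := by
    intro k hk
    have hm0 : C ^ m = 0 := by rw [← hC, h1, mul_zero]
    rw [← Nat.sub_add_cancel hk, pow_add, hm0, mul_zero]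
  rw [Fintype.linearIndependent_iff]
  intro g hg
  simp only [hC] at hg
  suffices h : ∀ n : ℕ, ∀ j : Fin m, (j : ℕ) = n → g j = 0 from fun i => h i i rfl
  intro n
  induction n using Nat.strong_induction_on with
  | _ n ih =>
    intro j hj
    have hjm : n < m := hj ▸ j.isLt
    have key : ∑ i : Fin m, g i • C ^ (m - 1 - n + (i : ℕ)) = 0 := by
      have := congrArg (fun x => C ^ (m - 1 - n) * x) hg
      simpa [Finset.mul_sum, mul_smul_comm, ← pow_add] using this
    rw [Finset.sum_eq_single j] at key
    · have he : m - 1 - n + (j : ℕ) = m - 1 := by omega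
      rw [he] at key
      by_contra hgj
      apply h3
      rw [hC]
      calc C ^ (m - 1) = (g j)⁻¹ • (g j • C ^ (m - 1)) := by
            rw [smul_smul, inv_mul_cancel₀ hgj, one_smul]
        _ = 0 := by rw [key, smul_zero]
    · intro i _ hij
      have hival : (i : ℕ) ≠ n := fun h => hij (Fin.ext (h.trans hj.symm))
      rcases lt_or_gt_of_ne hival with hlt | hgt
      · rw [ih i hlt i rfl, zero_smul]
      · have := i.isLt
        rw [hd _ (by omega), smul_zero]
    · intro h; exact absurd (Finset.mem_univ j) h
end

section
/- Let A_1, A_2, B_1, B_2 be elements of a unital ring such that all of A_1, A_2 commute with each other, B_1, B_2 commute with each other, and each A_i commutes with each B_j. If \Delta^{m_1}_{A_1,B_1} = 0 and \Delta^{m_2}_{A_2,B_2} = 0, then \Delta^{m_1+m_2-1}_{A_1A_2, B_1B_2} = 0, where \Delta^m_{A,B} := \sum_{j=0}^m (-1)^j \binom{m}{j} A^j B^j. -/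
theorem stmt_7 {R : Type*} [Ring R] (A₁ A₂ B₁ B₂ : R)
    (m₁ m₂ : ℕ) (hm₁ : 0 < m₁) (hm₂ : 0 < m₂)
    (hA : A₁ * A₂ = A₂ * A₁) (hB : B₁ * B₂ = B₂ * B₁)
    (hAB11 : A₁ * B₁ = B₁ * A₁) (hAB12 : A₁ * B₂ = B₂ * A₁)
    (hAB21 : A₂ * B₁ = B₁ * A₂) (hAB22 : A₂ * B₂ = B₂ * A₂)
    (h1 : ∑ j ∈ Finset.range (m₁ + 1),
        (-1 : R) ^ j * (m₁.choose j : R) * (A₁ ^ j * B₁ ^ j) = 0)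
    (h2 : ∑ j ∈ Finset.range (m₂ + 1),
        (-1 : R) ^ j * (m₂.choose j : R) * (A₂ ^ j * B₂ ^ j) = 0) :
    ∑ j ∈ Finset.range (m₁ + m₂ - 1 + 1),
      (-1 : R) ^ j * ((m₁ + m₂ - 1).choose j : R) *
        ((A₁ * A₂) ^ j * (B₁ * B₂) ^ j) = 0 := by
  -- general expansion lemma: for commuting x y, Σ (-1)^j C(m,j) x^j y^j = (1 - x*y)^m
  have expand : ∀ (x y : R), x * y = y * x → ∀ m : ℕ,
      ∑ j ∈ Finset.range (m + 1),
        (-1 : R) ^ j * (m.choose j : R) * (x ^ j * y ^ j) = (1 - x * y) ^ m := by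
    intro x y hxy m
    rw [show (1 : R) - x * y = -(x * y) + 1 from (neg_add_eq_sub _ _).symm,
      (Commute.one_right (-(x*y))).add_pow]
    refine Finset.sum_congr rfl fun j hj => ?_
    rw [one_pow, neg_pow (x * y) j, (show Commute x y from hxy).mul_pow, mul_one,
      mul_assoc, (Nat.cast_commute (m.choose j) (x ^ j * y ^ j)).eq, ← mul_assoc]
  have e1 : (1 - A₁ * B₁) ^ m₁ = 0 := by rw [← expand A₁ B₁ hAB11 m₁]; exact h1
  have e2 : (1 - A₂ * B₂) ^ m₂ = 0 := by rw [← expand A₂ B₂ hAB22 m₂]; exact h2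
  have key : (1 - (A₁ * A₂) * (B₁ * B₂)) ^ (m₁ + m₂ - 1) = 0 := by
    have split : 1 - (A₁ * A₂) * (B₁ * B₂)
        = (1 - A₁ * B₁) + (A₁ * B₁) * (1 - A₂ * B₂) := by
      have : A₁ * A₂ * (B₁ * B₂) = A₁ * B₁ * (A₂ * B₂) := by
        rw [mul_assoc, mul_assoc, ← mul_assoc A₂, hAB21, mul_assoc]
      rw [this]; noncomm_ring
    rw [split]
    have hcomm : Commute (1 - A₁ * B₁) ((A₁ * B₁) * (1 - A₂ * B₂)) := by
      have c1 : Commute (A₁ * B₁) (A₂ * B₂) :=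
        ((show Commute A₁ A₂ from hA).mul_right (show Commute A₁ B₂ from hAB12)).mul_left
          ((show Commute A₂ B₁ from hAB21).symm.mul_right (show Commute B₁ B₂ from hB))
      have c2 : Commute (1 - A₁ * B₁) (A₁ * B₁) :=
        (Commute.one_left _).sub_left (Commute.refl _)
      have c3 : Commute (1 - A₁ * B₁) (1 - A₂ * B₂) :=
        (Commute.one_left _).sub_left ((Commute.one_right _).sub_right c1)
      exact c2.mul_right c3
    have e2' : ((A₁ * B₁) * (1 - A₂ * B₂)) ^ m₂ = 0 := by
      have c : Commute (A₁ * B₁) (1 - A₂ * B₂) := by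
        have c1 : Commute (A₁ * B₁) (A₂ * B₂) :=
          ((show Commute A₁ A₂ from hA).mul_right (show Commute A₁ B₂ from hAB12)).mul_left
            ((show Commute A₂ B₁ from hAB21).symm.mul_right (show Commute B₁ B₂ from hB))
        exact (Commute.one_right _).sub_right c1
      rw [c.mul_pow, e2, mul_zero]
    exact hcomm.add_pow_eq_zero_of_add_le_succ_of_pow_eq_zero e1 e2' (by omega)
  rw [expand (A₁ * A₂) (B₁ * B₂) ?_ (m₁ + m₂ - 1), key]
  have : Commute (A₁ * A₂) (B₁ * B₂) :=
    ((show Commute A₁ B₁ from hAB11).mul_right (show Commute A₁ B₂ from hAB12)).mul_left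
      ((show Commute A₂ B₁ from hAB21).mul_right (show Commute A₂ B₂ from hAB22))
  exact this.eq
end

section
/- Let H be a complex Hilbert space and T a bounded linear operator on H that is m-symmetric, i.e., \sum_{j=0}^m (-1)^j \binom{m}{j} (T^*)^{m-j} T^j = 0. Then every approximate point spectrum value of T is real: if \lambda \in \mathbb{C} and there exist unit vectors x_n with (T - \lambda)x_n \to 0, then \lambda \in \mathbb{R}. -/
/-!
If `‖(T - λ) xₙ‖ → 0` for unit vectors `xₙ`, then `‖(Tᵏ - λᵏ) xₙ‖ → 0` for every `k`, so
`⟪T^(m-j) xₙ, T^j xₙ⟫ → conj λ^(m-j) λ^j`. Pairing the `m`-symmetry identity with `xₙ` therefore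
gives, in the limit, `∑ (-1)^j C(m,j) conj λ^(m-j) λ^j = (conj λ - λ)^m = 0`, i.e. `conj λ = λ`.
-/

open Filter Topology ComplexConjugate ContinuousLinearMap
open scoped InnerProductSpace

section Approximate

variable {ι 𝕜 E : Type*} [NormedField 𝕜] [NormedAddCommGroup E] [NormedSpace 𝕜 E]
  {l : Filter ι}

theorem tendsto_pow_sub_smul_one_apply {T : E →L[𝕜] E} {c : 𝕜} {x : ι → E}
    (h : Tendsto (fun i => (T - c • 1) (x i)) l (𝓝 0)) (j : ℕ) :
    Tendsto (fun i => (T ^ j - c ^ j • 1) (x i)) l (𝓝 0) := by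
  set S := ∑ k ∈ Finset.range j, T ^ k * (c • 1 : E →L[𝕜] E) ^ (j - 1 - k)
  have hfactor : T ^ j - c ^ j • 1 = S * (T - c • 1) := by
    rw [((Commute.one_right T).smul_right c).geom_sum₂_mul, smul_pow, one_pow]
  have hS := (S.continuous.tendsto 0).comp h
  rw [map_zero] at hS
  rw [hfactor]
  exact hS

end Approximate

section Inner

variable {ι 𝕜 E : Type*} [RCLike 𝕜] [NormedAddCommGroup E] [InnerProductSpace 𝕜 E]
  {l : Filter ι}

theorem norm_inner_apply_apply_sub_le (A B : E →L[𝕜] E) (a b : 𝕜) {x : E} (hx : ‖x‖ = 1) :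
    ‖⟪A x, B x⟫_𝕜 - conj a * b‖ ≤ ‖B‖ * ‖(A - a • 1) x‖ + ‖a‖ * ‖(B - b • 1) x‖ := by
  have hsplit : ⟪A x, B x⟫_𝕜 - conj a * b
      = ⟪(A - a • 1) x, B x⟫_𝕜 + conj a * ⟪x, (B - b • 1) x⟫_𝕜 := by
    simp only [sub_apply, smul_apply, one_apply_eq_self, inner_sub_left, inner_sub_right,
      inner_smul_left, inner_smul_right, inner_self_eq_norm_sq_to_K, hx]
    push_cast
    ring
  calc ‖⟪A x, B x⟫_𝕜 - conj a * b‖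
      ≤ ‖⟪(A - a • 1) x, B x⟫_𝕜‖ + ‖conj a * ⟪x, (B - b • 1) x⟫_𝕜‖ :=
        hsplit ▸ norm_add_le _ _
    _ ≤ ‖(A - a • 1) x‖ * (‖B‖ * ‖x‖) + ‖a‖ * (‖x‖ * ‖(B - b • 1) x‖) := by
        rw [norm_mul, RCLike.norm_conj]
        gcongr
        · exact (norm_inner_le_norm _ _).trans (by gcongr; exact B.le_opNorm x)
        · exact norm_inner_le_norm _ _
    _ = ‖B‖ * ‖(A - a • 1) x‖ + ‖a‖ * ‖(B - b • 1) x‖ := by rw [hx]; ring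

theorem tendsto_inner_apply_apply {x : ι → E} (hx : ∀ i, ‖x i‖ = 1) {A B : E →L[𝕜] E}
    {a b : 𝕜} (hA : Tendsto (fun i => (A - a • 1) (x i)) l (𝓝 0))
    (hB : Tendsto (fun i => (B - b • 1) (x i)) l (𝓝 0)) :
    Tendsto (fun i => ⟪A (x i), B (x i)⟫_𝕜) l (𝓝 (conj a * b)) := by
  rw [tendsto_iff_norm_sub_tendsto_zero]
  refine squeeze_zero (fun _ => norm_nonneg _)
    (fun i => norm_inner_apply_apply_sub_le A B a b (hx i)) ?_
  simpa using (hA.norm.const_mul ‖B‖).add (hB.norm.const_mul ‖a‖)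

theorem sum_inner_pow_apply_pow_apply_eq_zero [CompleteSpace E] {T : E →L[𝕜] E} {m : ℕ}
    (hsym : ∑ j ∈ Finset.range (m + 1), (-1 : E →L[𝕜] E) ^ j * (m.choose j : E →L[𝕜] E) *
      (adjoint T ^ (m - j) * T ^ j) = 0) (x : E) :
    ∑ j ∈ Finset.range (m + 1), (-1 : 𝕜) ^ j * m.choose j * ⟪(T ^ (m - j)) x, (T ^ j) x⟫_𝕜 = 0 := by
  have hterm (j : ℕ) : ⟪x, ((-1 : E →L[𝕜] E) ^ j * (m.choose j : E →L[𝕜] E) *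
      (adjoint T ^ (m - j) * T ^ j)) x⟫_𝕜
      = (-1 : 𝕜) ^ j * m.choose j * ⟪(T ^ (m - j)) x, (T ^ j) x⟫_𝕜 := by
    have hcoef : (-1 : E →L[𝕜] E) ^ j * (m.choose j : E →L[𝕜] E)
        = algebraMap 𝕜 _ ((-1) ^ j * m.choose j) := by
      simp
    rw [hcoef, ← Algebra.smul_def, smul_apply, inner_smul_right, mul_apply_eq_comp,
      ← star_eq_adjoint, ← star_pow, star_eq_adjoint, adjoint_inner_right]
  have happlied := congrArg (fun S => ⟪x, S x⟫_𝕜) hsym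
  simpa only [sum_apply, inner_sum, hterm, zero_apply, inner_zero_right] using happlied

end Inner

theorem sub_pow_eq_sum_neg_one_pow_mul {R : Type*} [CommRing R] (a b : R) (m : ℕ) :
    (a - b) ^ m =
      ∑ j ∈ Finset.range (m + 1), (-1 : R) ^ j * m.choose j * (a ^ (m - j) * b ^ j) := by
  rw [sub_eq_neg_add, add_pow]
  refine Finset.sum_congr rfl fun j _ => ?_
  rw [neg_pow]
  ring

theorem stmt_16_general {H : Type*} [NormedAddCommGroup H] [InnerProductSpace ℂ H]
    [CompleteSpace H] (T : H →L[ℂ] H) (m : ℕ)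
    (hsym : ∑ j ∈ Finset.range (m + 1),
        (-1 : H →L[ℂ] H) ^ j * (m.choose j : H →L[ℂ] H) *
          ((ContinuousLinearMap.adjoint T) ^ (m - j) * T ^ j) = 0)
    (lam : ℂ) (x : ℕ → H) (hx : ∀ n, ‖x n‖ = 1)
    (hlim : Filter.Tendsto (fun n => ‖(T - lam • 1) (x n)‖) Filter.atTop (nhds 0)) :
    lam.im = 0 := by
  have happrox (j : ℕ) : Tendsto (fun n => (T ^ j - lam ^ j • 1) (x n)) atTop (𝓝 0) :=
    tendsto_pow_sub_smul_one_apply (tendsto_zero_iff_norm_tendsto_zero.mpr hlim) j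
  have hsum : Tendsto (fun n => ∑ j ∈ Finset.range (m + 1),
      (-1 : ℂ) ^ j * m.choose j * ⟪(T ^ (m - j)) (x n), (T ^ j) (x n)⟫_ℂ)
      atTop (𝓝 ((conj lam - lam) ^ m)) := by
    rw [sub_pow_eq_sum_neg_one_pow_mul]
    refine tendsto_finsetSum _ fun j _ => ?_
    simpa only [map_pow] using
      (tendsto_inner_apply_apply hx (happrox (m - j)) (happrox j)).const_mul _
  have hzero : (conj lam - lam) ^ m = 0 := by
    simp only [sum_inner_pow_apply_pow_apply_eq_zero hsym] at hsum
    exact tendsto_nhds_unique hsum tendsto_const_nhds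
  exact Complex.conj_eq_iff_im.mp (sub_eq_zero.mp (eq_zero_of_pow_eq_zero hzero))

theorem stmt_16 {H : Type*} [NormedAddCommGroup H] [InnerProductSpace ℂ H]
    [CompleteSpace H] (T : H →L[ℂ] H) (m : ℕ) (hm : 0 < m)
    (hsym : ∑ j ∈ Finset.range (m + 1),
        (-1 : H →L[ℂ] H) ^ j * (m.choose j : H →L[ℂ] H) *
          ((ContinuousLinearMap.adjoint T) ^ (m - j) * T ^ j) = 0)
    (lam : ℂ) (x : ℕ → H) (hx : ∀ n, ‖x n‖ = 1)
    (hlim : Filter.Tendsto (fun n => ‖(T - lam • 1) (x n)‖) Filter.atTop (nhds 0)) :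
    lam.im = 0 :=
  stmt_16_general T m hsym lam x hx hlim
end
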